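/- arXiv:2508.09918 — 4 statements merged into one kernel-verified Lean document; each statement's English description precedes it below -/
import Mathlib

section
/- Let Φ be the transition matrix of a system with nonuniform bounded growth: ‖Φ(t,τ)‖ ≤ K₀ e^{η|τ|} e^{a|t-τ|} for all t,τ, with K₀ > 0, a > 0, η > 0. Then for every t and σ > 0, ζ₁(σ) e^{-2η|t|} I ≤ ∫_t^{t+σ} Φ(s,t)ᵀ Φ(s,t) ds ≤ ζ₂(σ) e^{2η|t|} I in the ordering of symmetric matrices, where ζ₁(σ) = (1 - e^{-2(a+η)σ})/(2K₀²(a+η)) and ζ₂(σ) = K₀²(e^{2aσ} - 1)/(2a). -/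
/-!
For any `A` and any left inverse `B` of `A` one has `|x|² ≤ ‖B‖² |A x|²` and `|A x|² ≤ ‖A‖² |x|²`,
so `‖Φ(t,s)‖⁻² I ≤ Φ(s,t)ᵀ Φ(s,t) ≤ ‖Φ(s,t)‖² I`. For `t ≤ s` the growth bound gives
`‖Φ(s,t)‖ ≤ K₀ e^{η|t|} e^{a(s-t)}` and, since `|s| ≤ |t| + (s - t)`,
`‖Φ(t,s)‖ ≤ K₀ e^{η|t|} e^{(a+η)(s-t)}`. Integration over `[t, t+σ]` preserves the Loewner order,
and integrating these two exponentials produces `ζ₁(σ)` and `ζ₂(σ)`.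
-/

open scoped Matrix.Norms.L2Operator
open Matrix Real intervalIntegral MeasureTheory

namespace Matrix

variable {m n : Type*} [Fintype m]

lemma isHermitian_transpose_mul_self (A : Matrix m n ℝ) : (Aᵀ * A).IsHermitian :=
  conjTranspose_eq_transpose_of_trivial A ▸ isHermitian_conjTranspose_mul_self A

variable [Fintype n]

lemma dotProduct_self_eq_norm_sq (v : n → ℝ) :
    v ⬝ᵥ v = ‖(EuclideanSpace.equiv n ℝ).symm v‖ ^ 2 := by
  rw [EuclideanSpace.real_norm_sq_eq]
  simp [dotProduct, sq]

lemma dotProduct_transpose_mul_self_mulVec (A : Matrix m n ℝ) (x : n → ℝ) :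
    x ⬝ᵥ (Aᵀ * A) *ᵥ x = (A *ᵥ x) ⬝ᵥ (A *ᵥ x) := by
  rw [← mulVec_mulVec, dotProduct_mulVec, vecMul_transpose]

variable [DecidableEq n]

lemma mulVec_dotProduct_mulVec_le (A : Matrix m n ℝ) (x : n → ℝ) :
    (A *ᵥ x) ⬝ᵥ (A *ᵥ x) ≤ ‖A‖ ^ 2 * (x ⬝ᵥ x) := by
  rw [dotProduct_self_eq_norm_sq, dotProduct_self_eq_norm_sq, ← mul_pow]
  gcongr
  exact A.l2_opNorm_mulVec _

lemma posSemidef_sq_smul_one_sub_transpose_mul_self {A : Matrix m n ℝ} {k : ℝ} (hA : ‖A‖ ≤ k) :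
    (k ^ 2 • (1 : Matrix n n ℝ) - Aᵀ * A).PosSemidef := by
  refine PosSemidef.of_dotProduct_mulVec_nonneg ?_ fun x => ?_
  · exact (isHermitian_one.smul (IsSelfAdjoint.all _)).sub (isHermitian_transpose_mul_self A)
  rw [star_trivial, sub_mulVec, dotProduct_sub, smul_mulVec, one_mulVec, dotProduct_smul,
    smul_eq_mul, sub_nonneg, dotProduct_transpose_mul_self_mulVec]
  calc (A *ᵥ x) ⬝ᵥ (A *ᵥ x) ≤ ‖A‖ ^ 2 * (x ⬝ᵥ x) := mulVec_dotProduct_mulVec_le A x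
    _ ≤ k ^ 2 * (x ⬝ᵥ x) := by gcongr; simpa using dotProduct_self_star_nonneg x

lemma posSemidef_transpose_mul_self_sub_inv_sq_smul_one [DecidableEq m]
    {A : Matrix m n ℝ} {B : Matrix n m ℝ} (hBA : B * A = 1) {k : ℝ} (hk : 0 < k) (hB : ‖B‖ ≤ k) :
    (Aᵀ * A - (k ^ 2)⁻¹ • (1 : Matrix n n ℝ)).PosSemidef := by
  refine PosSemidef.of_dotProduct_mulVec_nonneg ?_ fun x => ?_
  · exact (isHermitian_transpose_mul_self A).sub (isHermitian_one.smul (IsSelfAdjoint.all _))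
  rw [star_trivial, sub_mulVec, dotProduct_sub, smul_mulVec, one_mulVec, dotProduct_smul,
    smul_eq_mul, sub_nonneg, dotProduct_transpose_mul_self_mulVec, inv_mul_le_iff₀ (by positivity)]
  calc x ⬝ᵥ x = (B *ᵥ (A *ᵥ x)) ⬝ᵥ (B *ᵥ (A *ᵥ x)) := by rw [mulVec_mulVec, hBA, one_mulVec]
    _ ≤ ‖B‖ ^ 2 * ((A *ᵥ x) ⬝ᵥ (A *ᵥ x)) := mulVec_dotProduct_mulVec_le B _
    _ ≤ k ^ 2 * ((A *ᵥ x) ⬝ᵥ (A *ᵥ x)) := by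
      gcongr; simpa using dotProduct_self_star_nonneg (A *ᵥ x)

lemma PosSemidef.intervalIntegral {N : ℝ → Matrix n n ℝ} {a b : ℝ} (hab : a ≤ b)
    (hN : IntervalIntegrable N volume a b)
    (hpos : ∀ s ∈ Set.Icc a b, (N s).PosSemidef) : (∫ s in a..b, N s).PosSemidef := by
  refine PosSemidef.of_dotProduct_mulVec_nonneg ?_ fun x => ?_
  · have h := (transposeLinearEquiv n n ℝ ℝ).toLinearMap.toContinuousLinearMap
      |>.intervalIntegral_comp_comm hN
    rw [IsHermitian, conjTranspose_eq_transpose_of_trivial]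
    refine h.symm.trans (intervalIntegral.integral_congr fun s hs => ?_)
    rw [Set.uIcc_of_le hab] at hs
    exact (conjTranspose_eq_transpose_of_trivial _).symm.trans (hpos s hs).1
  · let q : Matrix n n ℝ →L[ℝ] ℝ := (LinearMap.toContinuousLinearMap
      { toFun := fun M => star x ⬝ᵥ M *ᵥ x
        map_add' := fun M N => by simp [add_mulVec, dotProduct_add]
        map_smul' := fun c M => by simp [smul_mulVec] })
    rw [show star x ⬝ᵥ (∫ s in a..b, N s) *ᵥ x = q (∫ s in a..b, N s) from rfl,
      ← q.intervalIntegral_comp_comm hN]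
    exact intervalIntegral.integral_nonneg hab fun s hs => (hpos s hs).dotProduct_mulVec_nonneg x

variable {N : ℝ → Matrix n n ℝ} {f : ℝ → ℝ} {a b : ℝ}

lemma posSemidef_intervalIntegral_sub_smul_one (hab : a ≤ b)
    (hN : IntervalIntegrable N volume a b)
    (hf : IntervalIntegrable f volume a b)
    (h : ∀ s ∈ Set.Icc a b, (N s - f s • (1 : Matrix n n ℝ)).PosSemidef) :
    ((∫ s in a..b, N s) - (∫ s in a..b, f s) • (1 : Matrix n n ℝ)).PosSemidef := by
  have hf1 := hf.smul_continuousOn (continuousOn_const (c := (1 : Matrix n n ℝ)))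
  rw [← intervalIntegral.integral_smul_const, ← intervalIntegral.integral_sub hN hf1]
  exact PosSemidef.intervalIntegral hab (hN.sub hf1) h

lemma posSemidef_smul_one_sub_intervalIntegral (hab : a ≤ b)
    (hN : IntervalIntegrable N volume a b)
    (hf : IntervalIntegrable f volume a b)
    (h : ∀ s ∈ Set.Icc a b, (f s • (1 : Matrix n n ℝ) - N s).PosSemidef) :
    ((∫ s in a..b, f s) • (1 : Matrix n n ℝ) - ∫ s in a..b, N s).PosSemidef := by
  have hf1 := hf.smul_continuousOn (continuousOn_const (c := (1 : Matrix n n ℝ)))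
  rw [← intervalIntegral.integral_smul_const, ← intervalIntegral.integral_sub hf1 hN]
  exact PosSemidef.intervalIntegral hab (hf1.sub hN) h

end Matrix

lemma integral_exp_mul_sub {k : ℝ} (hk : k ≠ 0) (t σ : ℝ) :
    ∫ s in t..t + σ, exp (k * (s - t)) = (exp (k * σ) - 1) / k := by
  rw [intervalIntegral.integral_comp_sub_right (fun u => exp (k * u)), sub_self,
    add_sub_cancel_left, intervalIntegral.integral_comp_mul_left exp hk, integral_exp, mul_zero,
    exp_zero, smul_eq_mul]
  field_simp

section NonuniformGrowth

variable {E : Type*} [Norm E]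

def HasNonuniformBoundedGrowth (Φ : ℝ → ℝ → E) (K₀ a η : ℝ) : Prop :=
  ∀ t τ : ℝ, ‖Φ t τ‖ ≤ K₀ * exp (η * |τ|) * exp (a * |t - τ|)

namespace HasNonuniformBoundedGrowth

variable {Φ : ℝ → ℝ → E} {K₀ a η : ℝ}

lemma norm_le (h : HasNonuniformBoundedGrowth Φ K₀ a η) {s t : ℝ} (hts : t ≤ s) :
    ‖Φ s t‖ ≤ K₀ * exp (η * |t|) * exp (a * (s - t)) := by
  simpa [abs_of_nonneg (sub_nonneg.2 hts)] using h s t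

lemma norm_swap_le (h : HasNonuniformBoundedGrowth Φ K₀ a η) (hK₀ : 0 ≤ K₀) (hη : 0 ≤ η)
    {s t : ℝ} (hts : t ≤ s) : ‖Φ t s‖ ≤ K₀ * exp (η * |t|) * exp ((a + η) * (s - t)) := by
  have habs : |s| ≤ |t| + (s - t) := by
    simpa [abs_of_nonneg (sub_nonneg.2 hts)] using abs_add_le t (s - t)
  calc ‖Φ t s‖ ≤ K₀ * exp (η * |s|) * exp (a * (s - t)) := by
        simpa [abs_sub_comm t s, abs_of_nonneg (sub_nonneg.2 hts)] using h t s
    _ ≤ K₀ * exp (η * (|t| + (s - t))) * exp (a * (s - t)) := by gcongr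
    _ = K₀ * exp (η * |t|) * exp ((a + η) * (s - t)) := by
        rw [mul_add, add_mul, exp_add, exp_add]; ring

end HasNonuniformBoundedGrowth

end NonuniformGrowth

/-- if `‖Φ(t,τ)‖ ≤ K₀ e^{η|τ|} e^{a|t-τ|}` (nonuniform bounded growth),
then `ζ₁(σ) e^{-2η|t|} I ≤ ∫_t^{t+σ} Φ(s,t)ᵀ Φ(s,t) ds ≤ ζ₂(σ) e^{2η|t|} I`
in the positive semidefinite (Loewner) ordering, with
`ζ₁(σ) = (1 - e^{-2(a+η)σ})/(2K₀²(a+η))` and `ζ₂(σ) = K₀²(e^{2aσ} - 1)/(2a)`. -/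
theorem gramian_growth_bounds {n : ℕ}
    (Φ : ℝ → ℝ → Matrix (Fin n) (Fin n) ℝ)
    (hΦid : ∀ t, Φ t t = 1)
    (hΦcocycle : ∀ a b c, Φ a b * Φ b c = Φ a c)
    (hΦcont : Continuous fun p : ℝ × ℝ => Φ p.1 p.2)
    (K₀ a η : ℝ) (hK₀ : 0 < K₀) (ha : 0 < a) (hη : 0 < η)
    (hgrowth : ∀ t τ : ℝ, ‖Φ t τ‖ ≤ K₀ * exp (η * |τ|) * exp (a * |t - τ|)) :
    ∀ t σ : ℝ, 0 < σ →
      ((∫ s in t..(t + σ), (Φ s t)ᵀ * Φ s t) -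
          (((1 - exp (-2 * (a + η) * σ)) / (2 * K₀ ^ 2 * (a + η))) * exp (-2 * η * |t|)) •
            (1 : Matrix (Fin n) (Fin n) ℝ)).PosSemidef ∧
      (((K₀ ^ 2 * (exp (2 * a * σ) - 1) / (2 * a)) * exp (2 * η * |t|)) •
          (1 : Matrix (Fin n) (Fin n) ℝ) -
          (∫ s in t..(t + σ), (Φ s t)ᵀ * Φ s t)).PosSemidef := by
  intro t σ hσ
  have hle : t ≤ t + σ := by linarith
  have hΦt : Continuous fun s => Φ s t := hΦcont.comp (continuous_id.prodMk continuous_const)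
  have hG : IntervalIntegrable (fun s => (Φ s t)ᵀ * Φ s t) volume t (t + σ) :=
    (hΦt.matrix_transpose.matrix_mul hΦt).intervalIntegrable _ _
  have hexp (k c : ℝ) :
      IntervalIntegrable (fun s => c * exp (k * (s - t))) volume t (t + σ) :=
    (by fun_prop : Continuous fun s => c * exp (k * (s - t))).intervalIntegrable _ _
  constructor
  · convert Matrix.posSemidef_intervalIntegral_sub_smul_one hle hG
      (hexp (-2 * (a + η)) ((K₀ ^ 2)⁻¹ * exp (-2 * η * |t|))) fun s hs => ?_ using 3
    · rw [intervalIntegral.integral_const_mul, integral_exp_mul_sub (by nlinarith)]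
      field_simp
      ring
    convert Matrix.posSemidef_transpose_mul_self_sub_inv_sq_smul_one
      (by rw [hΦcocycle, hΦid] : Φ t s * Φ s t = 1) (by positivity)
      (HasNonuniformBoundedGrowth.norm_swap_le hgrowth hK₀.le hη.le hs.1) using 3
    simp only [mul_pow, ← exp_nat_mul, mul_inv, ← exp_neg]
    ring_nf
  · convert Matrix.posSemidef_smul_one_sub_intervalIntegral hle hG
      (hexp (2 * a) (K₀ ^ 2 * exp (2 * η * |t|))) fun s hs => ?_ using 3
    · rw [intervalIntegral.integral_const_mul, integral_exp_mul_sub (by positivity)]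
      ring
    convert Matrix.posSemidef_sq_smul_one_sub_transpose_mul_self
      (HasNonuniformBoundedGrowth.norm_le hgrowth hs.1) using 3
    simp only [mul_pow, ← exp_nat_mul]
    ring_nf
end

section
/- There is no function α : [0,∞) → (0,∞) mapping bounded sets to bounded sets such that e^{t cos t - s cos s + sin s - sin t} ≤ α(|t-s|) for all t, s ∈ ℝ. Concretely, taking t = 2nπ and s = 3π/2 + 2(n-1)π, the required inequality forces 2nπ - 1 ≤ 2 ln α(π/2) for all n ∈ ℕ, a contradiction as n → ∞. -/
open Real

/-- there is no positive function `α` mapping bounded sets to bounded sets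
such that `e^{t cos t - s cos s + sin s - sin t} ≤ α(|t-s|)` for all `t, s ∈ ℝ`;
i.e., the system fails Kalman's uniform condition. -/
theorem no_uniform_kalman_bound :
    ¬ ∃ α : ℝ → ℝ,
        (∀ r : ℝ, 0 ≤ r → 0 < α r) ∧
        (∀ B : ℝ, 0 < B → ∃ C : ℝ, ∀ r ∈ Set.Icc (0 : ℝ) B, α r ≤ C) ∧
        (∀ t s : ℝ, exp (t * cos t - s * cos s + sin s - sin t) ≤ α |t - s|) := by
  rintro ⟨α, hpos, -, hle⟩
  set C := α (π / 2) with hC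
  have hCpos : 0 < C := hpos _ (by positivity)
  obtain ⟨n, hn⟩ := exists_nat_gt ((Real.log C + 1) / (2 * π))
  have hπ : (0:ℝ) < 2 * π := by positivity
  have hn' : Real.log C + 1 < (n : ℝ) * (2 * π) := by
    rw [div_lt_iff₀ hπ] at hn
    linarith
  set t : ℝ := (n : ℝ) * (2 * π)
  set s : ℝ := t - π / 2
  have hct : cos t = 1 := Real.cos_nat_mul_two_pi n
  have hst : sin t = 0 := by
    have h2n : ((2*n:ℕ):ℝ) * π = t := by push_cast; ring
    rw [← h2n]; exact Real.sin_nat_mul_pi (2*n)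
  have hcs : cos s = 0 := by
    have : s = t - π / 2 := rfl
    rw [this, Real.cos_sub_pi_div_two, hst]
  have hss : sin s = -1 := by
    have : s = t - π / 2 := rfl
    rw [this, Real.sin_sub_pi_div_two, hct]
  have habs : |t - s| = π / 2 := by
    have : t - s = π / 2 := by simp [s]
    rw [this, abs_of_pos (by positivity)]
  have h := hle t s
  rw [habs, hct, hst, hcs, hss, ← hC] at h
  have h2 : exp (t * 1 - s * 0 + -1 - 0) = exp (t - 1) := by ring_nf
  rw [h2] at h
  have : C < exp (t - 1) := by
    calc C = exp (Real.log C) := (Real.exp_log hCpos).symm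
    _ < exp (t - 1) := Real.exp_lt_exp.mpr (by linarith)
  linarith
end

section
/- There is no α : [0,∞) → (0,∞) mapping bounded sets into bounded sets and no ν ≥ 0 such that e^{|t³-s³|/3} ≤ e^{ν|s|} α(|t-s|) for all t, s ∈ ℝ. In particular, taking t = aₙ, s = aₙ - 1 with aₙ → ∞ yields the contradiction 1 ≤ (3 ln α(1) + 3ν|aₙ-1|)/(aₙ² + aₙ(aₙ-1) + (aₙ-1)²). -/
open Real

/-- there is no `ν ≥ 0` and no positive function `α` mapping bounded sets
to bounded sets such that `e^{|t³-s³|/3} ≤ e^{ν|s|} α(|t-s|)` for all `t, s ∈ ℝ`;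
i.e., the system `ẋ = diag(-t², t²)x` fails the nonuniform Kalman property. -/
theorem no_nonuniform_kalman_bound :
    ¬ ∃ (ν : ℝ) (α : ℝ → ℝ), 0 ≤ ν ∧
        (∀ r : ℝ, 0 ≤ r → 0 < α r) ∧
        (∀ B : ℝ, 0 < B → ∃ C : ℝ, ∀ r ∈ Set.Icc (0 : ℝ) B, α r ≤ C) ∧
        (∀ t s : ℝ, exp (|t ^ 3 - s ^ 3| / 3) ≤ exp (ν * |s|) * α |t - s|) := by
  rintro ⟨ν, α, hν, hpos, hbd, hineq⟩
  obtain ⟨C, hC⟩ := hbd 1 one_pos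
  have hα1 : α 1 ≤ C := hC 1 ⟨zero_le_one, le_refl 1⟩
  set M : ℝ := max C 1 with hMdef
  have hM1 : (1 : ℝ) ≤ M := le_max_right _ _
  have hMpos : (0 : ℝ) < M := lt_of_lt_of_le one_pos hM1
  have hL : (0 : ℝ) ≤ Real.log M := Real.log_nonneg hM1
  set L := Real.log M with hLdef
  set t : ℝ := ν + L + 2 with htdef
  set s : ℝ := ν + L + 1 with hsdef
  have hs0 : (0 : ℝ) ≤ s := by positivity
  have hts : t - s = 1 := by simp [htdef, hsdef]; ring
  have hcube : (0 : ℝ) ≤ t ^ 3 - s ^ 3 := by nlinarith [sq_nonneg t, sq_nonneg s, sq_nonneg (t+s)]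
  have key := hineq t s
  rw [hts, abs_of_nonneg hs0, abs_of_nonneg hcube, abs_one] at key
  have hαM : α 1 ≤ M := le_trans hα1 (le_max_left _ _)
  have key2 : exp ((t ^ 3 - s ^ 3) / 3) ≤ exp (ν * s) * M := by
    calc exp ((t ^ 3 - s ^ 3) / 3) ≤ exp (ν * s) * α 1 := key
    _ ≤ exp (ν * s) * M := by
        exact mul_le_mul_of_nonneg_left hαM (le_of_lt (exp_pos _))
  have key3 : (t ^ 3 - s ^ 3) / 3 ≤ ν * s + L := by
    have : exp ((t ^ 3 - s ^ 3) / 3) ≤ exp (ν * s + L) := by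
      rw [Real.exp_add, hLdef, Real.exp_log hMpos]
      exact key2
    exact (Real.exp_le_exp).mp this
  nlinarith [mul_nonneg hν hL, mul_nonneg hν hν, sq_nonneg L, mul_nonneg hν hν]
end

section
/- Suppose S : ℝ → M_{n×n}(ℝ) is C¹, symmetric positive definite with C₁ e^{-2φ₁|t|} I ≤ S(t) ≤ C₂ e^{2φ₂|t|} I for constants C₁, C₂ > 0, φ₁, φ₂ ≥ 0, and suppose Ṡ(t) + V(t)ᵀS(t) + S(t)V(t) ≤ -(I + L·S(t)) for some constant L > 2φ₁. Then the system ẋ = V(t)x is nonuniformly exponentially stable forward: there exists M ≥ 1 such that ‖Φ_V(t,s)‖ ≤ M e^{(φ₁+φ₂)|s|} e^{-(L/2 - φ₁)(t-s)} for all t ≥ s. -/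
/-!
Along a solution `x(r) = Φ(r, s) x₀` the Lyapunov function `v = xᵀ S x` satisfies
`v̇ = xᵀ (Ṡ + VᵀS + SV) x ≤ -L v` by the Riccati inequality, so `v(t) ≤ v(s) e^{-L(t-s)}` by
Grönwall. Sandwiching `v` between the bounds on `S` gives
`C₁ e^{-2φ₁|t|} |x(t)|² ≤ C₂ e^{2φ₂|s|} e^{-L(t-s)} |x₀|²`, and `|t| ≤ |s| + (t - s)` turns the
factor `e^{2φ₁|t|}` into the nonuniform factor `e^{2φ₁|s|}` and a loss `2φ₁` in the rate.
-/

open scoped Matrix.Norms.L2Operator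
open Matrix Real Set

section Calculus

variable {m n : Type*} [Fintype m] [Fintype n]

theorem HasDerivAt.dotProduct {x y : ℝ → n → ℝ} {x' y' : n → ℝ} {t : ℝ}
    (hx : HasDerivAt x x' t) (hy : HasDerivAt y y' t) :
    HasDerivAt (fun r => x r ⬝ᵥ y r) (x' ⬝ᵥ y t + x t ⬝ᵥ y') t := by
  have h : HasDerivAt (fun r => ∑ i, x r i * y r i) (∑ i, (x' i * y t i + x t i * y' i)) t :=
    .fun_sum fun i _ => (hasDerivAt_pi.1 hx i).fun_mul (hasDerivAt_pi.1 hy i)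
  rw [Finset.sum_add_distrib] at h
  exact h

variable [DecidableEq n]

theorem HasDerivAt.matrix_entry {A : ℝ → Matrix m n ℝ} {A' : Matrix m n ℝ} {t : ℝ}
    (hA : HasDerivAt A A' t) (i : m) (j : n) :
    HasDerivAt (fun r => A r i j) (A' i j) t :=
  (LinearMap.toContinuousLinearMap (entryLinearMap ℝ ℝ i j)).hasFDerivAt.comp_hasDerivAt t hA

theorem HasDerivAt.mulVec {A : ℝ → Matrix m n ℝ} {x : ℝ → n → ℝ} {A' : Matrix m n ℝ}
    {x' : n → ℝ} {t : ℝ} (hA : HasDerivAt A A' t) (hx : HasDerivAt x x' t) :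
    HasDerivAt (fun r => A r *ᵥ x r) (A' *ᵥ x t + A t *ᵥ x') t := by
  refine hasDerivAt_pi.2 fun i => ?_
  have h : HasDerivAt (fun r => ∑ j, A r i j * x r j)
      (∑ j, (A' i j * x t j + A t i j * x' j)) t :=
    .fun_sum fun j _ => (hA.matrix_entry i j).fun_mul (hasDerivAt_pi.1 hx j)
  rw [Finset.sum_add_distrib] at h
  exact h

end Calculus

theorem le_mul_exp_of_hasDerivAt_le_mul {v v' : ℝ → ℝ} {c s t : ℝ}
    (hv : ∀ r ∈ Icc s t, HasDerivAt v (v' r) r) (hle : ∀ r ∈ Ico s t, v' r ≤ c * v r)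
    (hst : s ≤ t) : v t ≤ v s * exp (c * (t - s)) := by
  have h := le_gronwallBound_of_liminf_deriv_right_le (δ := v s) (ε := 0)
    (fun r hr => (hv r hr).continuousAt.continuousWithinAt)
    (fun r hr _ hlt => (hv r (Ico_subset_Icc_self hr)).hasDerivWithinAt.liminf_right_slope_le hlt)
    le_rfl (fun r hr => by simpa using hle r hr) t ⟨hst, le_rfl⟩
  rwa [gronwallBound_ε0] at h

theorem EuclideanSpace.real_norm_sq_eq_dotProduct {n : Type*} [Fintype n]
    (x : EuclideanSpace ℝ n) : ‖x‖ ^ 2 = x.ofLp ⬝ᵥ x.ofLp := by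
  rw [EuclideanSpace.real_norm_sq_eq, dotProduct]
  simp only [sq]

theorem l2_opNorm_le_of_dotProduct_le {m n : Type*} [Fintype m] [Fintype n] [DecidableEq n]
    {A : Matrix m n ℝ} {B : ℝ} (hB : 0 ≤ B)
    (h : ∀ x, (A *ᵥ x) ⬝ᵥ (A *ᵥ x) ≤ B ^ 2 * (x ⬝ᵥ x)) : ‖A‖ ≤ B := by
  refine ContinuousLinearMap.opNorm_le_bound _ hB fun y => ?_
  rw [← sq_le_sq₀ (norm_nonneg _) (by positivity), mul_pow,
    EuclideanSpace.real_norm_sq_eq_dotProduct, EuclideanSpace.real_norm_sq_eq_dotProduct]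
  exact h y.ofLp

section Lyapunov

variable {n : Type*} [Fintype n]

theorem dotProduct_mulVec_le_of_posSemidef_sub {A B : Matrix n n ℝ} (h : (B - A).PosSemidef)
    (x : n → ℝ) : x ⬝ᵥ (A *ᵥ x) ≤ x ⬝ᵥ (B *ᵥ x) := by
  have := h.dotProduct_mulVec_nonneg x
  simp only [star_trivial, sub_mulVec, dotProduct_sub] at this
  linarith

variable [DecidableEq n]

theorem riccati_lyapunov_deriv_le {S S' V : Matrix n n ℝ} {L : ℝ}
    (h : (-(1 + L • S) - (S' + Vᵀ * S + S * V)).PosSemidef) (x : n → ℝ) :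
    (V *ᵥ x) ⬝ᵥ (S *ᵥ x) + x ⬝ᵥ (S' *ᵥ x + S *ᵥ (V *ᵥ x)) ≤ -L * (x ⬝ᵥ (S *ᵥ x)) := by
  have hx : 0 ≤ x ⬝ᵥ x := by simpa using dotProduct_self_star_nonneg x
  have := dotProduct_mulVec_le_of_posSemidef_sub h x
  simp only [add_mulVec, neg_mulVec, one_mulVec, smul_mulVec, ← mulVec_mulVec, dotProduct_add,
    dotProduct_neg, dotProduct_smul, smul_eq_mul, dotProduct_mulVec x Vᵀ, vecMul_transpose] at this
  rw [dotProduct_add]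
  linarith

theorem lyapunov_decay_of_riccati {V S S' : ℝ → Matrix n n ℝ} {x : ℝ → n → ℝ} {L s t : ℝ}
    (hx : ∀ r ∈ Icc s t, HasDerivAt x (V r *ᵥ x r) r)
    (hS : ∀ r ∈ Icc s t, HasDerivAt S (S' r) r)
    (hRiccati : ∀ r ∈ Icc s t, (-(1 + L • S r) - (S' r + (V r)ᵀ * S r + S r * V r)).PosSemidef)
    (hst : s ≤ t) :
    x t ⬝ᵥ (S t *ᵥ x t) ≤ x s ⬝ᵥ (S s *ᵥ x s) * exp (-L * (t - s)) :=
  le_mul_exp_of_hasDerivAt_le_mul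
    (fun r hr => (hx r hr).dotProduct ((hS r hr).mulVec (hx r hr)))
    (fun r hr => riccati_lyapunov_deriv_le (hRiccati r (Ico_subset_Icc_self hr)) (x r)) hst

end Lyapunov

theorem le_mul_max_one_sqrt_div_sq {a b : ℝ} (ha : 0 < a) : b ≤ a * max 1 √(b / a) ^ 2 := by
  rw [← div_le_iff₀' ha]
  calc b / a ≤ √(b / a) ^ 2 := by rw [Real.sq_sqrt']; exact le_max_left _ _
    _ ≤ max 1 √(b / a) ^ 2 := by gcongr; exact le_max_right _ _

theorem exp_abs_weight_le {φ₁ φ₂ L s t : ℝ} (hφ₁ : 0 ≤ φ₁) (hst : s ≤ t) :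
    exp (2 * φ₂ * |s|) * exp (-L * (t - s)) ≤
      exp (-2 * φ₁ * |t|) * (exp ((φ₁ + φ₂) * |s|) * exp (-(L / 2 - φ₁) * (t - s))) ^ 2 := by
  have habs : |t| ≤ |s| + (t - s) := by
    linarith [abs_sub_abs_le_abs_sub t s, abs_of_nonneg (sub_nonneg.2 hst)]
  rw [← exp_add, ← exp_add, sq, ← exp_add, ← exp_add, exp_le_exp]
  nlinarith

theorem riccati_implies_nues_forward_general {n : ℕ}
    (V : ℝ → Matrix (Fin n) (Fin n) ℝ)
    (Φ : ℝ → ℝ → Matrix (Fin n) (Fin n) ℝ)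
    (hΦ0 : ∀ s, Φ s s = 1)
    (hΦ : ∀ s t, HasDerivAt (fun r => Φ r s) (V t * Φ t s) t)
    (S S' : ℝ → Matrix (Fin n) (Fin n) ℝ)
    (hS' : ∀ t, HasDerivAt S (S' t) t)
    (C₁ C₂ φ₁ φ₂ L : ℝ)
    (hC₁ : 0 < C₁) (hφ₁ : 0 ≤ φ₁)
    (hSlower : ∀ t, (S t - (C₁ * exp (-2 * φ₁ * |t|)) •
        (1 : Matrix (Fin n) (Fin n) ℝ)).PosSemidef)
    (hSupper : ∀ t, ((C₂ * exp (2 * φ₂ * |t|)) • (1 : Matrix (Fin n) (Fin n) ℝ) -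
        S t).PosSemidef)
    (hRiccati : ∀ t, (-(1 + L • S t) -
        (S' t + (V t)ᵀ * S t + S t * V t)).PosSemidef) :
    ∃ M : ℝ, 1 ≤ M ∧ ∀ t s : ℝ, s ≤ t →
      ‖Φ t s‖ ≤ M * exp ((φ₁ + φ₂) * |s|) * exp (-(L / 2 - φ₁) * (t - s)) := by
  have hM := le_mul_max_one_sqrt_div_sq (b := C₂) hC₁
  refine ⟨max 1 √(C₂ / C₁), le_max_left _ _, fun t s hst =>
    l2_opNorm_le_of_dotProduct_le (by positivity) fun x₀ => ?_⟩
  set x : ℝ → Fin n → ℝ := fun r => Φ r s *ᵥ x₀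
  have hx : ∀ r, HasDerivAt x (V r *ᵥ x r) r := fun r => by
    simpa [x, mulVec_mulVec] using (hΦ s r).mulVec (hasDerivAt_const r x₀)
  have decay : x t ⬝ᵥ (S t *ᵥ x t) ≤ x₀ ⬝ᵥ (S s *ᵥ x₀) * exp (-L * (t - s)) := by
    simpa [x, hΦ0] using lyapunov_decay_of_riccati (fun r _ => hx r) (fun r _ => hS' r)
      (fun r _ => hRiccati r) hst
  have lower := dotProduct_mulVec_le_of_posSemidef_sub (hSlower t) (x t)
  have upper := dotProduct_mulVec_le_of_posSemidef_sub (hSupper s) x₀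
  simp only [smul_mulVec, one_mulVec, dotProduct_smul, smul_eq_mul] at lower upper
  have hx₀ : 0 ≤ x₀ ⬝ᵥ x₀ := by simpa using dotProduct_self_star_nonneg x₀
  have hweight := exp_abs_weight_le (φ₂ := φ₂) (L := L) hφ₁ hst
  refine le_of_mul_le_mul_left ?_ (by positivity : 0 < C₁ * exp (-2 * φ₁ * |t|))
  calc C₁ * exp (-2 * φ₁ * |t|) * (x t ⬝ᵥ x t) ≤ x₀ ⬝ᵥ (S s *ᵥ x₀) * exp (-L * (t - s)) :=
        lower.trans decay
    _ ≤ C₂ * (exp (2 * φ₂ * |s|) * exp (-L * (t - s))) * (x₀ ⬝ᵥ x₀) :=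
        (mul_le_mul_of_nonneg_right upper (exp_pos _).le).trans_eq (by ring)
    _ ≤ C₁ * max 1 √(C₂ / C₁) ^ 2 * (exp (-2 * φ₁ * |t|) *
          (exp ((φ₁ + φ₂) * |s|) * exp (-(L / 2 - φ₁) * (t - s))) ^ 2) * (x₀ ⬝ᵥ x₀) := by
        gcongr
    _ = _ := by ring

/-- if a C¹ symmetric positive definite `S(t)` satisfies
`C₁ e^{-2φ₁|t|} I ≤ S(t) ≤ C₂ e^{2φ₂|t|} I` and the Riccati-type inequality
`Ṡ(t) + V(t)ᵀS(t) + S(t)V(t) ≤ -(I + L·S(t))` with `L > 2φ₁`, then `ẋ = V(t)x` is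
nonuniformly exponentially stable forward:
`‖Φ_V(t,s)‖ ≤ M e^{(φ₁+φ₂)|s|} e^{-(L/2 - φ₁)(t-s)}` for all `t ≥ s`. -/
theorem riccati_implies_nues_forward {n : ℕ}
    (V : ℝ → Matrix (Fin n) (Fin n) ℝ)
    (hVmeas : ∀ i j, Measurable fun t => V t i j)
    (hVbdd : ∀ r : ℝ, ∃ K : ℝ, ∀ t ∈ Set.Icc (-r) r, ‖V t‖ ≤ K)
    (Φ : ℝ → ℝ → Matrix (Fin n) (Fin n) ℝ)
    (hΦ0 : ∀ s, Φ s s = 1)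
    (hΦ : ∀ s t, HasDerivAt (fun r => Φ r s) (V t * Φ t s) t)
    (S S' : ℝ → Matrix (Fin n) (Fin n) ℝ)
    (hS' : ∀ t, HasDerivAt S (S' t) t)
    (hS'cont : Continuous S')
    (hSpd : ∀ t, (S t).PosDef)
    (C₁ C₂ φ₁ φ₂ L : ℝ)
    (hC₁ : 0 < C₁) (hC₂ : 0 < C₂) (hφ₁ : 0 ≤ φ₁) (hφ₂ : 0 ≤ φ₂)
    (hL : 2 * φ₁ < L)
    (hSlower : ∀ t, (S t - (C₁ * exp (-2 * φ₁ * |t|)) •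
        (1 : Matrix (Fin n) (Fin n) ℝ)).PosSemidef)
    (hSupper : ∀ t, ((C₂ * exp (2 * φ₂ * |t|)) • (1 : Matrix (Fin n) (Fin n) ℝ) -
        S t).PosSemidef)
    (hRiccati : ∀ t, (-(1 + L • S t) -
        (S' t + (V t)ᵀ * S t + S t * V t)).PosSemidef) :
    ∃ M : ℝ, 1 ≤ M ∧ ∀ t s : ℝ, s ≤ t →
      ‖Φ t s‖ ≤ M * exp ((φ₁ + φ₂) * |s|) * exp (-(L / 2 - φ₁) * (t - s)) :=
  riccati_implies_nues_forward_general V Φ hΦ0 hΦ S S' hS' C₁ C₂ φ₁ φ₂ L hC₁ hφ₁ hSlower hSupper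
    hRiccati
end
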